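/- arXiv:1901.06644 — 4 statements merged into one kernel-verified Lean document; each statement's English description precedes it below -/
import Mathlib

section
/- Let H and G be independent exponentially distributed random variables with means Ω_k > 0 and Ω_I > 0 respectively. Let τ > 0, ρ > 0, ε > 0, and θ ≥ τ. Then P( H > θ and G < (H - τ)/(ε ρ τ) ) = e^{-θ/Ω_k} - (ε ρ τ Ω_I / (Ω_k + ε ρ τ Ω_I)) · e^{ -θ(Ω_k + ε ρ τ Ω_I)/(ε ρ τ Ω_I Ω_k) + 1/(ε ρ Ω_I) }. -/
/-!
Conditioning on `H = h`: by independence the event has probability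
`∫_{h > θ} P(G < (h - τ)/(ερτ)) dP_H(h)`. Since `θ ≥ τ` the threshold is nonnegative on the range
of integration, so the inner probability is the exponential CDF `1 - e^{-(h - τ)/(ερτ Ω_I)}`, and
what remains is the difference of two elementary exponential integrals over `(θ, ∞)`.
-/

open MeasureTheory ProbabilityTheory Real Set

lemma ProbabilityTheory.IndepFun.measure_lt_and_lt_comp_eq_lintegral {Ω : Type*}
    [MeasurableSpace Ω] {μ : Measure Ω} [IsFiniteMeasure μ] {X Y : Ω → ℝ}
    (hX : Measurable X) (hY : Measurable Y) (hXY : IndepFun X Y μ) {g : ℝ → ℝ}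
    (hg : Measurable g) (θ : ℝ) :
    μ {ω | θ < X ω ∧ Y ω < g (X ω)} = ∫⁻ x in Ioi θ, μ.map Y (Iio (g x)) ∂μ.map X := by
  set S := {p : ℝ × ℝ | θ < p.1 ∧ p.2 < g p.1}
  have hS : MeasurableSet S :=
    (measurableSet_lt measurable_const measurable_fst).inter
      (measurableSet_lt measurable_snd (hg.comp measurable_fst))
  have hsection (x : ℝ) :
      μ.map Y (Prod.mk x ⁻¹' S) = (Ioi θ).indicator (fun x ↦ μ.map Y (Iio (g x))) x := by
    by_cases hx : θ < x <;> simp [S, hx, Iio]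
  calc μ {ω | θ < X ω ∧ Y ω < g (X ω)}
      = μ.map (fun ω ↦ (X ω, Y ω)) S := (Measure.map_apply (hX.prodMk hY) hS).symm
    _ = (μ.map X).prod (μ.map Y) S := by
      rw [(indepFun_iff_map_prod_eq_prod_map_map hX.aemeasurable hY.aemeasurable).mp hXY]
    _ = ∫⁻ x in Ioi θ, μ.map Y (Iio (g x)) ∂μ.map X := by
      rw [Measure.prod_apply hS, ← lintegral_indicator measurableSet_Ioi]
      simp_rw [hsection]

lemma ProbabilityTheory.expMeasure_eq_withDensity (r : ℝ) :
    expMeasure r = volume.withDensity (exponentialPDF r) := rfl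

lemma ProbabilityTheory.expMeasure_Iio {r x : ℝ} (hr : 0 < r) (hx : 0 ≤ x) :
    expMeasure r (Iio x) = ENNReal.ofReal (1 - exp (-(r * x))) := by
  rw [expMeasure_eq_withDensity, withDensity_apply _ measurableSet_Iio,
    setLIntegral_congr Iio_ae_eq_Iic, lintegral_exponentialPDF_eq_antiDeriv hr, if_pos hx]

lemma ProbabilityTheory.setIntegral_expMeasure_Ioi {r θ : ℝ} (hr : 0 ≤ r) (hθ : 0 ≤ θ)
    (f : ℝ → ℝ) :
    ∫ x in Ioi θ, f x ∂expMeasure r = ∫ x in Ioi θ, r * exp (-(r * x)) * f x := by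
  rw [expMeasure_eq_withDensity, restrict_withDensity measurableSet_Ioi,
    integral_withDensity_eq_integral_toReal_smul (f := exponentialPDF r)
      (measurable_exponentialPDFReal r).ennreal_ofReal
      (ae_of_all _ fun _ ↦ ENNReal.ofReal_lt_top)]
  refine setIntegral_congr_fun measurableSet_Ioi fun x hx ↦ ?_
  rw [exponentialPDF_of_nonneg (hθ.trans hx.out.le), ENNReal.toReal_ofReal (by positivity),
    smul_eq_mul]

lemma ProbabilityTheory.setIntegral_expMeasure_Ioi_one_sub_exp {r s θ : ℝ} (hr : 0 < r)
    (hrs : 0 < r + s) (hθ : 0 ≤ θ) (a : ℝ) :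
    ∫ x in Ioi θ, (1 - exp (-(s * (x - a)))) ∂expMeasure r =
      exp (-(r * θ)) - r / (r + s) * exp (s * a - (r + s) * θ) := by
  have hsplit (x : ℝ) : r * exp (-(r * x)) * (1 - exp (-(s * (x - a)))) =
      r * exp (-r * x) - r * exp (s * a) * exp (-(r + s) * x) := by
    rw [mul_one_sub, mul_assoc, ← exp_add, mul_assoc, ← exp_add]
    ring_nf
  rw [setIntegral_expMeasure_Ioi hr.le hθ]
  simp_rw [hsplit]
  rw [integral_sub ((integrableOn_exp_mul_Ioi (by linarith) θ).const_mul r)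
      ((integrableOn_exp_mul_Ioi (by linarith) θ).const_mul _),
    integral_const_mul, integral_const_mul, integral_exp_mul_Ioi (by linarith),
    integral_exp_mul_Ioi (by linarith), sub_eq_add_neg (s * a), exp_add]
  field_simp

lemma ProbabilityTheory.IndepFun.measureReal_lt_and_lt_sub_div_of_expMeasure {Ω : Type*}
    [MeasurableSpace Ω] {μ : Measure Ω} [IsFiniteMeasure μ] {X Y : Ω → ℝ}
    (hX : Measurable X) (hY : Measurable Y) (hXY : IndepFun X Y μ) {r q : ℝ} (hr : 0 < r)
    (hq : 0 < q) (hXlaw : μ.map X = expMeasure r) (hYlaw : μ.map Y = expMeasure q)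
    {a θ k : ℝ} (hk : 0 < k) (ha : a ≤ θ) (hθ : 0 ≤ θ) :
    μ.real {ω | θ < X ω ∧ Y ω < (X ω - a) / k} =
      exp (-(r * θ)) - r / (r + q / k) * exp (q / k * a - (r + q / k) * θ) := by
  have hYcdf : ∀ x ∈ Ioi θ,
      expMeasure q (Iio ((x - a) / k)) = ENNReal.ofReal (1 - exp (-(q / k * (x - a)))) := by
    intro x hx
    rw [expMeasure_Iio hq (div_nonneg (by linarith [hx.out]) hk.le), mul_div_assoc',
      div_mul_eq_mul_div]
  have hnonneg : ∀ x ∈ Ioi θ, 0 ≤ 1 - exp (-(q / k * (x - a))) := fun x hx ↦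
    sub_nonneg.2 <| exp_le_one_iff.2 <| neg_nonpos.2 <|
      mul_nonneg (by positivity) (by linarith [hx.out])
  rw [measureReal_def,
    hXY.measure_lt_and_lt_comp_eq_lintegral (g := fun x ↦ (x - a) / k) hX hY (by fun_prop) θ,
    hXlaw, hYlaw, setLIntegral_congr_fun measurableSet_Ioi hYcdf,
    ← integral_eq_lintegral_of_nonneg_ae (ae_restrict_of_forall_mem measurableSet_Ioi hnonneg)
      (by fun_prop),
    setIntegral_expMeasure_Ioi_one_sub_exp hr (by positivity) hθ]

/-- J₂: joint SIC success probability for two independent exponentials. -/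
theorem prob_J2
    {Ω' : Type*} [MeasurableSpace Ω'] (μ : Measure Ω') [IsProbabilityMeasure μ]
    (H G : Ω' → ℝ) (Omk OmI τ ρ ε θ : ℝ)
    (hOmk : 0 < Omk) (hOmI : 0 < OmI) (hτ : 0 < τ) (hρ : 0 < ρ) (hε : 0 < ε)
    (hθ : τ ≤ θ)
    (hmH : Measurable H) (hmG : Measurable G)
    (hindep : IndepFun H G μ)
    (hH : Measure.map H μ = expMeasure (1 / Omk))
    (hG : Measure.map G μ = expMeasure (1 / OmI)) :
    (μ {ω | H ω > θ ∧ G ω < (H ω - τ) / (ε * ρ * τ)}).toReal =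
      exp (-θ / Omk) - (ε * ρ * τ * OmI / (Omk + ε * ρ * τ * OmI)) *
        exp (-θ * (Omk + ε * ρ * τ * OmI) / (ε * ρ * τ * OmI * Omk) + 1 / (ε * ρ * OmI)) := by
  change μ.real {ω | θ < H ω ∧ G ω < (H ω - τ) / (ε * ρ * τ)} = _
  rw [hindep.measureReal_lt_and_lt_sub_div_of_expMeasure hmH hmG (by positivity)
    (by positivity) hH hG (by positivity) hθ (hτ.le.trans hθ)]
  congr 2
  · ring
  · field_simp
    ring
  · congr 1
    field_simp
    ring
end

section
/- Let H be exponentially distributed with mean Ω > 0 and let ρ, b_l, b_t, ϖ, γ_l, γ_t > 0 satisfy b_l > ϖ γ_l and b_t > (b_l + ϖ) γ_t. Then P( ρ H b_t/(ρ H b_l + ρ ϖ H + 1) > γ_t and ρ H b_l/(ρ ϖ H + 1) > γ_l ) = e^{-θ/Ω}, where θ = max(τ, ξ), τ = γ_l/(ρ(b_l - ϖ γ_l)), ξ = γ_t/(ρ(b_t - b_l γ_t - ϖ γ_t)). -/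
/-!
For `H ≥ 0` each SINR condition `γ < ρ H b / (ρ c H + 1)` with `c γ < b` is equivalent to the
threshold condition `γ / (ρ (b - c γ)) < H`, so the joint event is `{max τ ξ < H}` up to the null
set `{H ≤ 0}`, and the exponential tail gives `P(H > θ) = exp (-θ / Ω)`.
-/

open MeasureTheory ProbabilityTheory Real Set

namespace ProbabilityTheory

lemma expMeasure_Iic_zero {r : ℝ} (hr : 0 < r) : expMeasure r (Iic 0) = 0 := by
  have := isProbabilityMeasure_expMeasure hr
  rw [← ofReal_cdf, cdf_expMeasure_eq hr, if_pos le_rfl]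
  simp

lemma ae_pos_expMeasure {r : ℝ} (hr : 0 < r) : ∀ᵐ x ∂expMeasure r, 0 < x := by
  simpa [ae_iff, Iic] using expMeasure_Iic_zero hr

lemma measureReal_expMeasure_Ioi {r t : ℝ} (hr : 0 < r) (ht : 0 ≤ t) :
    (expMeasure r).real (Ioi t) = exp (-(r * t)) := by
  have := isProbabilityMeasure_expMeasure hr
  rw [← compl_Iic, probReal_compl_eq_one_sub measurableSet_Iic, ← cdf_eq_real,
    cdf_expMeasure_eq hr, if_pos ht, sub_sub_cancel]

end ProbabilityTheory

lemma lt_mul_div_mul_add_one_iff {ρ b c γ x : ℝ} (hρ : 0 < ρ) (hc : 0 ≤ c) (hcγ : c * γ < b)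
    (hx : 0 ≤ x) : γ < ρ * x * b / (ρ * c * x + 1) ↔ γ / (ρ * (b - c * γ)) < x := by
  have hgap : 0 < ρ * (b - c * γ) := mul_pos hρ (by linarith)
  rw [lt_div_iff₀ (by positivity), div_lt_iff₀ hgap]
  constructor <;> intro h <;> linarith

lemma sic_success_iff {ρ bl bt ϖ γl γt x : ℝ} (hρ : 0 < ρ) (hbl : 0 < bl) (hϖ : 0 < ϖ)
    (hc1 : bl > ϖ * γl) (hc2 : bt > (bl + ϖ) * γt) (hx : 0 ≤ x) :
    (ρ * x * bt / (ρ * x * bl + ρ * ϖ * x + 1) > γt ∧ ρ * x * bl / (ρ * ϖ * x + 1) > γl) ↔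
      max (γl / (ρ * (bl - ϖ * γl))) (γt / (ρ * (bt - bl * γt - ϖ * γt))) < x := by
  have hden : ρ * x * bl + ρ * ϖ * x + 1 = ρ * (bl + ϖ) * x + 1 := by ring
  have hgap : bt - bl * γt - ϖ * γt = bt - (bl + ϖ) * γt := by ring
  rw [gt_iff_lt, gt_iff_lt, hden, hgap, max_lt_iff, and_comm,
    lt_mul_div_mul_add_one_iff hρ (by positivity) hc2 hx,
    lt_mul_div_mul_add_one_iff hρ hϖ.le hc1 hx]

theorem prob_joint_sic_success_general
    {Ω' : Type*} [MeasurableSpace Ω'] (μ : Measure Ω')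
    (H : Ω' → ℝ) (Om ρ bl bt ϖ γl γt : ℝ)
    (hOm : 0 < Om) (hρ : 0 < ρ) (hbl : 0 < bl) (hϖ : 0 < ϖ)
    (hγl : 0 < γl)
    (hc1 : bl > ϖ * γl) (hc2 : bt > (bl + ϖ) * γt)
    (hmH : Measurable H)
    (hH : Measure.map H μ = expMeasure (1 / Om)) :
    (μ {ω | ρ * H ω * bt / (ρ * H ω * bl + ρ * ϖ * H ω + 1) > γt ∧
            ρ * H ω * bl / (ρ * ϖ * H ω + 1) > γl}).toReal =
      exp (-(max (γl / (ρ * (bl - ϖ * γl))) (γt / (ρ * (bt - bl * γt - ϖ * γt)))) / Om) := by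
  set θ := max (γl / (ρ * (bl - ϖ * γl))) (γt / (ρ * (bt - bl * γt - ϖ * γt)))
  have hθ : 0 ≤ θ := le_max_of_le_left (div_nonneg hγl.le (mul_pos hρ (by linarith)).le)
  have hH_pos : ∀ᵐ ω ∂μ, 0 < H ω :=
    ae_of_ae_map hmH.aemeasurable (hH ▸ ae_pos_expMeasure (by positivity))
  have hevent : {ω | ρ * H ω * bt / (ρ * H ω * bl + ρ * ϖ * H ω + 1) > γt ∧
      ρ * H ω * bl / (ρ * ϖ * H ω + 1) > γl} =ᵐ[μ] H ⁻¹' Ioi θ := by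
    filter_upwards [hH_pos] with ω hω
    exact propext (sic_success_iff hρ hbl hϖ hc1 hc2 hω.le)
  rw [measure_congr hevent, ← Measure.map_apply hmH measurableSet_Ioi, hH, ← measureReal_def,
    measureReal_expMeasure_Ioi (by positivity) hθ]
  congr 1
  field_simp

/-- Joint SIC-decoding success probability at the nearby user with perfect SIC. -/
theorem prob_joint_sic_success
    {Ω' : Type*} [MeasurableSpace Ω'] (μ : Measure Ω') [IsProbabilityMeasure μ]
    (H : Ω' → ℝ) (Om ρ bl bt ϖ γl γt : ℝ)
    (hOm : 0 < Om) (hρ : 0 < ρ) (hbl : 0 < bl) (hbt : 0 < bt) (hϖ : 0 < ϖ)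
    (hγl : 0 < γl) (hγt : 0 < γt)
    (hc1 : bl > ϖ * γl) (hc2 : bt > (bl + ϖ) * γt)
    (hmH : Measurable H)
    (hH : Measure.map H μ = expMeasure (1 / Om)) :
    (μ {ω | ρ * H ω * bt / (ρ * H ω * bl + ρ * ϖ * H ω + 1) > γt ∧
            ρ * H ω * bl / (ρ * ϖ * H ω + 1) > γl}).toReal =
      exp (-(max (γl / (ρ * (bl - ϖ * γl))) (γt / (ρ * (bt - bl * γt - ϖ * γt)))) / Om) :=
  prob_joint_sic_success_general μ H Om ρ bl bt ϖ γl γt hOm hρ hbl hϖ hγl hc1 hc2 hmH hH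
end

section
/- Fix positive constants a_l, a_t, b_l, ε, Ω_l, Ω_t, Ω_k, Ω_I and define, for ρ > 0, Ψ(ρ) = (a_l Ω_l + b_l Ω_k)/(ρ a_l b_l Ω_l Ω_k), Λ1 = ε Ω_I/(b_l Ω_k), Λ2 = a_t Ω_t/(a_l Ω_l) (assume Λ1, Λ2, 1 pairwise distinct), and R(ρ) = -(1/(2 ln 2))[ A e^{Ψ} Ei(-Ψ) + (B/Λ1) e^{Ψ/Λ1} Ei(-Ψ/Λ1) + (C/Λ2) e^{Ψ/Λ2} Ei(-Ψ/Λ2) ] with A = 1/((Λ1-1)(Λ2-1)), B = (A(Λ1 - Λ1Λ2) - Λ1)/(Λ2 - Λ1), C = 1 - A - B. Then lim_{ρ→∞} R(ρ)/log₂ ρ = 0. -/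
open MeasureTheory Real Filter

/-- The exponential integral `Ei x = -∫_{-x}^∞ e^{-t}/t dt`. -/
noncomputable def expIntegralEi (x : ℝ) : ℝ := -∫ t in Set.Ioi (-x), exp (-t) / t

/-! Near `0⁺`, `e^y Ei(-y) = log y + O(1)`: splitting `∫_y^∞ e^{-t}/t` at `1`, the part on
`[y, 1]` is `-log y + O(1)` because `1 - t ≤ e^{-t} ≤ 1`, and the tail is at most `e^{-1}`.
The weights `A`, `B/Λ1`, `C/Λ2` sum to zero, so the three `log Ψ` terms of `R` cancel and `R`
stays bounded while `log₂ ρ → ∞`. -/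

open Set Topology Asymptotics

lemma integrableOn_exp_neg_div_Ioi {x : ℝ} (hx : 0 < x) :
    IntegrableOn (fun t => exp (-t) / t) (Ioi x) := by
  have hdom : IntegrableOn (fun t => exp (-t) / x) (Ioi x) := by
    simpa [IntegrableOn] using (exp_neg_integrableOn_Ioi x one_pos).div_const x
  refine hdom.mono' ?_ ?_
  · exact (ContinuousOn.div (by fun_prop) continuousOn_id fun t ht =>
      (hx.trans ht).ne').aestronglyMeasurable measurableSet_Ioi
  · filter_upwards [ae_restrict_mem measurableSet_Ioi] with t ht
    rw [norm_of_nonneg (div_nonneg (exp_pos _).le (hx.trans ht).le)]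
    exact div_le_div_of_nonneg_left (exp_pos _).le hx (le_of_lt ht)

lemma setIntegral_exp_neg_div_Ioi_one_mem : (∫ t in Ioi 1, exp (-t) / t) ∈ Icc 0 1 := by
  constructor
  · exact setIntegral_nonneg measurableSet_Ioi fun t ht =>
      div_nonneg (exp_pos _).le (by linarith [ht.out])
  · calc (∫ t in Ioi 1, exp (-t) / t) ≤ ∫ t in Ioi 1, exp (-t) := by
          refine setIntegral_mono_on (integrableOn_exp_neg_div_Ioi one_pos)
            (by simpa using exp_neg_integrableOn_Ioi 1 one_pos) measurableSet_Ioi fun t ht => ?_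
          exact div_le_self (exp_pos _).le (le_of_lt ht)
      _ = exp (-1) := integral_exp_neg_Ioi 1
      _ ≤ 1 := exp_le_one_iff.2 (by norm_num)

lemma intervalIntegral_exp_neg_div_mem {x : ℝ} (hx0 : 0 < x) (hx1 : x ≤ 1) :
    (∫ t in x..1, exp (-t) / t) ∈ Icc (-log x - 1) (-log x) := by
  have hpos : ∀ t ∈ Icc x 1, 0 < t := fun t ht => hx0.trans_le ht.1
  have hf : IntervalIntegrable (fun t => exp (-t) / t) volume x 1 :=
    (intervalIntegrable_iff_integrableOn_Ioc_of_le hx1).2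
      ((integrableOn_exp_neg_div_Ioi hx0).mono_set Ioc_subset_Ioi_self)
  have hinv : IntervalIntegrable (fun t : ℝ => t⁻¹) volume x 1 :=
    (continuousOn_inv₀.mono fun t ht =>
      (hpos t (by rwa [uIcc_of_le hx1] at ht)).ne').intervalIntegrable
  have hlog : ∫ t in x..1, t⁻¹ = -log x := by
    rw [integral_inv_of_pos hx0 one_pos, one_div, log_inv]
  constructor
  · calc -log x - 1 ≤ ∫ t in x..1, (t⁻¹ - 1) := by
          rw [intervalIntegral.integral_sub hinv intervalIntegrable_const, hlog]
          simp only [intervalIntegral.integral_const, smul_eq_mul, mul_one]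
          linarith
      _ ≤ ∫ t in x..1, exp (-t) / t := by
          refine intervalIntegral.integral_mono_on hx1 (hinv.sub intervalIntegrable_const) hf
            fun t ht => ?_
          have := hpos t ht
          rw [inv_eq_one_div, div_sub_one this.ne']
          gcongr
          linarith [add_one_le_exp (-t)]
  · calc ∫ t in x..1, exp (-t) / t ≤ ∫ t in x..1, t⁻¹ :=
          intervalIntegral.integral_mono_on hx1 hf hinv fun t ht => by
            rw [inv_eq_one_div]
            have := hpos t ht
            gcongr
            exact exp_le_one_iff.2 (by linarith)
      _ = -log x := hlog

lemma abs_expIntegralEi_neg_sub_log_le {x : ℝ} (hx0 : 0 < x) (hx1 : x ≤ 1) :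
    |expIntegralEi (-x) - log x| ≤ 1 := by
  have hsplit : expIntegralEi (-x) =
      -((∫ t in x..1, exp (-t) / t) + ∫ t in Ioi 1, exp (-t) / t) := by
    rw [intervalIntegral.integral_interval_add_Ioi (integrableOn_exp_neg_div_Ioi hx0)
      (integrableOn_exp_neg_div_Ioi one_pos), expIntegralEi, neg_neg]
  obtain ⟨hnear_lb, hnear_ub⟩ := intervalIntegral_exp_neg_div_mem hx0 hx1
  obtain ⟨htail_lb, htail_ub⟩ := setIntegral_exp_neg_div_Ioi_one_mem
  rw [hsplit, abs_le]
  constructor <;> linarith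

lemma abs_exp_mul_expIntegralEi_neg_sub_log_le {y : ℝ} (hy0 : 0 < y) (hy1 : y ≤ 1) :
    |exp y * expIntegralEi (-y) - log y| ≤ 5 := by
  have hEi := abs_expIntegralEi_neg_sub_log_le hy0 hy1
  have hlog : |log y| = -log y := abs_of_nonpos (log_nonpos hy0.le hy1)
  have hylog : y * -log y ≤ 1 := by
    have := abs_log_mul_self_lt y hy0 hy1
    rw [abs_lt] at this
    linarith
  have hexp : |exp y - 1| ≤ 2 * y := by
    simpa [abs_of_pos hy0] using abs_exp_sub_one_le (x := y) (by rwa [abs_of_pos hy0])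
  calc |exp y * expIntegralEi (-y) - log y|
        = |(expIntegralEi (-y) - log y) +
            (exp y - 1) * ((expIntegralEi (-y) - log y) + log y)| := by
          congr 1; ring
    _ ≤ 1 + 2 * y * (1 + -log y) := by
        refine (abs_add_le _ _).trans (add_le_add hEi ?_)
        rw [abs_mul]
        exact mul_le_mul hexp ((abs_add_le _ _).trans (by rw [hlog]; linarith)) (abs_nonneg _)
          (by positivity)
    _ ≤ 5 := by nlinarith

lemma isBigO_exp_mul_expIntegralEi_neg_sub_log :
    (fun y => exp y * expIntegralEi (-y) - log y) =O[𝓝[>] 0] (fun _ => (1 : ℝ)) :=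
  IsBigO.of_bound 5 <| by
    filter_upwards [Ioc_mem_nhdsGT one_pos] with y hy
    simpa using abs_exp_mul_expIntegralEi_neg_sub_log_le hy.1 hy.2

lemma tendsto_div_const_nhdsGT_zero {c : ℝ} (hc : 0 < c) :
    Tendsto (fun y => y / c) (𝓝[>] 0) (𝓝[>] 0) := by
  refine tendsto_nhdsWithin_iff.2
    ⟨?_, eventually_nhdsWithin_of_forall fun y hy => div_pos hy hc⟩
  simpa using (continuous_id.div_const c).tendsto' 0 0 (zero_div c) |>.mono_left nhdsWithin_le_nhds

lemma isBigO_sum_mul_exp_mul_expIntegralEi {ι : Type*} (s : Finset ι) (w c : ι → ℝ)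
    (hc : ∀ i ∈ s, 0 < c i) (hw : ∑ i ∈ s, w i = 0) :
    (fun y => ∑ i ∈ s, w i * exp (y / c i) * expIntegralEi (-(y / c i)))
      =O[𝓝[>] 0] (fun _ => (1 : ℝ)) := by
  set G : ℝ → ℝ := fun y => exp y * expIntegralEi (-y) - log y
  have hsum : ∀ y ≠ 0, ∑ i ∈ s, w i * exp (y / c i) * expIntegralEi (-(y / c i))
      = ∑ i ∈ s, w i * (G (y / c i) - log (c i)) := fun y hy =>
    calc ∑ i ∈ s, w i * exp (y / c i) * expIntegralEi (-(y / c i))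
        = ∑ i ∈ s, (w i * (G (y / c i) - log (c i)) + w i * log y) :=
          Finset.sum_congr rfl fun i hi => by
            simp only [G]
            rw [log_div hy (hc i hi).ne']
            ring
      _ = ∑ i ∈ s, w i * (G (y / c i) - log (c i)) := by
          rw [Finset.sum_add_distrib, ← Finset.sum_mul, hw, zero_mul, add_zero]
  refine IsBigO.congr' ?_ (eventually_nhdsWithin_of_forall fun y hy => (hsum y (ne_of_gt hy)).symm)
    EventuallyEq.rfl
  refine IsBigO.fun_sum fun i hi => IsBigO.const_mul_left ?_ (w i)
  exact (isBigO_exp_mul_expIntegralEi_neg_sub_log.comp_tendsto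
    (tendsto_div_const_nhdsGT_zero (hc i hi))).sub
    (isBigO_const_const _ one_ne_zero _)

/-- Zero high-SNR slope of the ergodic rate of x_l with imperfect SIC. -/
theorem zero_high_snr_slope
    (al at_ bl ε Oml Omt Omk OmI : ℝ)
    (hal : 0 < al) (hat : 0 < at_) (hbl : 0 < bl) (hε : 0 < ε)
    (hOml : 0 < Oml) (hOmt : 0 < Omt) (hOmk : 0 < Omk) (hOmI : 0 < OmI)
    (Λ1 Λ2 : ℝ)
    (hΛ1 : Λ1 = ε * OmI / (bl * Omk)) (hΛ2 : Λ2 = at_ * Omt / (al * Oml))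
    (h12 : Λ1 ≠ Λ2) (h1 : Λ1 ≠ 1) (h2 : Λ2 ≠ 1)
    (A B C : ℝ)
    (hA : A = 1 / ((Λ1 - 1) * (Λ2 - 1)))
    (hB : B = (A * (Λ1 - Λ1 * Λ2) - Λ1) / (Λ2 - Λ1))
    (hC : C = 1 - A - B)
    (Ψ R : ℝ → ℝ)
    (hΨ : ∀ ρ, Ψ ρ = (al * Oml + bl * Omk) / (ρ * al * bl * Oml * Omk))
    (hR : ∀ ρ, R ρ = -(1 / (2 * log 2)) *
      (A * exp (Ψ ρ) * expIntegralEi (-(Ψ ρ)) +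
        (B / Λ1) * exp (Ψ ρ / Λ1) * expIntegralEi (-(Ψ ρ / Λ1)) +
        (C / Λ2) * exp (Ψ ρ / Λ2) * expIntegralEi (-(Ψ ρ / Λ2)))) :
    Tendsto (fun ρ => R ρ / logb 2 ρ) atTop (nhds 0) := by
  have hΛ1p : 0 < Λ1 := by rw [hΛ1]; positivity
  have hΛ2p : 0 < Λ2 := by rw [hΛ2]; positivity
  have hweights : A + B / Λ1 + C / Λ2 = 0 := by
    subst hC hB hA
    field_simp [sub_ne_zero.2 h1, sub_ne_zero.2 h2, sub_ne_zero.2 h12.symm]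
    ring
  have hΨ0 : Tendsto Ψ atTop (𝓝[>] 0) := by
    have hK : 0 < al * bl * Oml * Omk / (al * Oml + bl * Omk) := by positivity
    have hΨinv : Ψ = fun ρ => ρ⁻¹ / (al * bl * Oml * Omk / (al * Oml + bl * Omk)) := by
      funext ρ
      rw [hΨ]
      field_simp
    rw [hΨinv]
    exact (tendsto_div_const_nhdsGT_zero hK).comp tendsto_inv_atTop_nhdsGT_zero
  have hRsum : R = fun ρ => -(1 / (2 * log 2)) * ∑ i : Fin 3,
      ![A, B / Λ1, C / Λ2] i * exp (Ψ ρ / ![1, Λ1, Λ2] i) *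
        expIntegralEi (-(Ψ ρ / ![1, Λ1, Λ2] i)) := by
    funext ρ
    simp [hR, Fin.sum_univ_three]
  have hRbdd : R =O[atTop] (fun _ => (1 : ℝ)) := by
    rw [hRsum]
    refine IsBigO.const_mul_left ?_ _
    refine (isBigO_sum_mul_exp_mul_expIntegralEi _ _ _ ?_ ?_).comp_tendsto hΨ0
    · simp [Fin.forall_fin_succ, hΛ1p, hΛ2p]
    · simpa [Fin.sum_univ_three] using hweights
  have hlogb : (fun _ => (1 : ℝ)) =o[atTop] logb 2 :=
    isLittleO_const_left.2 (Or.inr (tendsto_norm_atTop_atTop.comp (tendsto_logb_atTop one_lt_two)))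
  exact (hRbdd.trans_isLittleO hlogb).tendsto_div_nhds_zero
end

section
/- Let X_l, X_t be independent exponentially distributed random variables with means Ω_l, Ω_t > 0 and let a_l, a_t > 0, γ > 0. Then lim_{ρ→∞} P( ρ a_l X_l/(ρ a_t X_t + 1) > γ ) = 1/(1 + γ a_t Ω_t/(a_l Ω_l)), which is strictly less than 1. Consequently the outage probability P(SINR ≤ γ) has a nonzero limit (error floor) as ρ → ∞. -/
open MeasureTheory ProbabilityTheory Real Filter

/-! Since `X_t ≥ 0` almost surely, for `ρ > 0` the event `SINR > γ` is exactly
`X_l > c X_t + d` with `c = γ a_t / a_l` and `d = γ / (ρ a_l)`. Conditioning on `X_t` and using the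
exponential tail of `X_l`, its probability is `exp(-d/Ω_l) · E[exp(-c X_t/Ω_l)]
= exp(-d/Ω_l) / (1 + γ a_t Ω_t / (a_l Ω_l))`, and `d → 0` as `ρ → ∞`. -/

namespace ProbabilityTheory

open Set

lemma ae_nonneg_expMeasure (r : ℝ) : ∀ᵐ x ∂expMeasure r, 0 ≤ x := by
  rw [ae_iff]
  simp only [not_le]
  change expMeasure r (Iio 0) = 0
  rw [expMeasure, gammaMeasure, withDensity_apply _ measurableSet_Iio]
  exact lintegral_exponentialPDF_of_nonpos le_rfl

lemma expMeasure_Ioi {r x : ℝ} (hr : 0 < r) (hx : 0 ≤ x) :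
    expMeasure r (Ioi x) = ENNReal.ofReal (rexp (-(r * x))) := by
  have := isProbabilityMeasure_expMeasure hr
  rw [← ofReal_measureReal, ← compl_Iic, measureReal_compl measurableSet_Iic, ← cdf_eq_real,
    cdf_expMeasure_eq hr, if_pos hx, probReal_univ, sub_sub_cancel]

lemma lintegral_exp_neg_mul_expMeasure {s t : ℝ} (hs : 0 ≤ s) (hst : 0 < s + t) :
    ∫⁻ y, ENNReal.ofReal (rexp (-(t * y))) ∂expMeasure s = ENNReal.ofReal (s / (s + t)) := by
  -- the integrand turns the density of rate `s` into a multiple of the density of rate `s + t`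
  have hpdf : ∀ y, exponentialPDF s y * ENNReal.ofReal (rexp (-(t * y)))
      = ENNReal.ofReal (s / (s + t)) * exponentialPDF (s + t) y := by
    intro y
    rcases lt_or_ge y 0 with hy | hy
    · simp [exponentialPDF_of_neg hy]
    · rw [exponentialPDF_of_nonneg hy, exponentialPDF_of_nonneg hy,
        ← ENNReal.ofReal_mul (by positivity), ← ENNReal.ofReal_mul (by positivity)]
      congr 1
      rw [mul_assoc, ← Real.exp_add]
      field_simp
      ring_nf
  rw [expMeasure, gammaMeasure, lintegral_withDensity_eq_lintegral_mul _
    (show Measurable (gammaPDF 1 s) from (measurable_gammaPDFReal 1 s).ennreal_ofReal)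
    (by fun_prop)]
  change ∫⁻ y, exponentialPDF s y * ENNReal.ofReal (rexp (-(t * y))) = _
  rw [lintegral_congr hpdf, lintegral_const_mul' _ _ ENNReal.ofReal_ne_top,
    lintegral_exponentialPDF_eq_one hst, mul_one]

lemma prod_expMeasure_affine_lt {r s c d : ℝ} (hr : 0 < r) (hs : 0 < s) (hc : 0 ≤ c)
    (hd : 0 ≤ d) :
    (expMeasure s).prod (expMeasure r) {p | c * p.1 + d < p.2}
      = ENNReal.ofReal (rexp (-(r * d)) * (s / (s + r * c))) := by
  have := isProbabilityMeasure_expMeasure hr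
  rw [Measure.prod_apply (measurableSet_lt (by fun_prop) (by fun_prop))]
  calc ∫⁻ y, expMeasure r (Prod.mk y ⁻¹' {p | c * p.1 + d < p.2}) ∂expMeasure s
      = ∫⁻ y, ENNReal.ofReal (rexp (-(r * d))) * ENNReal.ofReal (rexp (-(r * c * y)))
          ∂expMeasure s := by
        refine lintegral_congr_ae ?_
        filter_upwards [ae_nonneg_expMeasure s] with y hy
        rw [show Prod.mk y ⁻¹' {p : ℝ × ℝ | c * p.1 + d < p.2} = Ioi (c * y + d) from rfl,
          expMeasure_Ioi hr (by positivity), ← ENNReal.ofReal_mul (exp_pos _).le, ← exp_add]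
        ring_nf
    _ = ENNReal.ofReal (rexp (-(r * d)) * (s / (s + r * c))) := by
        rw [lintegral_const_mul' _ _ ENNReal.ofReal_ne_top,
          lintegral_exp_neg_mul_expMeasure hs.le (by positivity),
          ← ENNReal.ofReal_mul (exp_pos _).le]

lemma measure_affine_lt_of_indepFun {Ω : Type*} [MeasurableSpace Ω] {μ : Measure Ω}
    [IsFiniteMeasure μ] {X Y : Ω → ℝ} {r s c d : ℝ} (hr : 0 < r) (hs : 0 < s) (hc : 0 ≤ c)
    (hd : 0 ≤ d) (hX : AEMeasurable X μ) (hY : AEMeasurable Y μ) (hXY : IndepFun X Y μ)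
    (hXr : μ.map X = expMeasure r) (hYs : μ.map Y = expMeasure s) :
    μ {ω | c * Y ω + d < X ω} = ENNReal.ofReal (rexp (-(r * d)) * (s / (s + r * c))) := by
  have hmap : μ.map (fun ω ↦ (Y ω, X ω)) = (expMeasure s).prod (expMeasure r) := by
    rw [← hXr, ← hYs]
    exact (indepFun_iff_map_prod_eq_prod_map_map hY hX).mp hXY.symm
  have hS : MeasurableSet {p : ℝ × ℝ | c * p.1 + d < p.2} :=
    measurableSet_lt (by fun_prop) (by fun_prop)
  rw [← prod_expMeasure_affine_lt hr hs hc hd, ← hmap, Measure.map_apply₀ (hY.prodMk hX)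
    hS.nullMeasurableSet]
  rfl

end ProbabilityTheory

lemma sinr_gt_iff {ρ al at_ γ x y : ℝ} (hρ : 0 < ρ) (hal : 0 < al) (hat : 0 ≤ at_)
    (hy : 0 ≤ y) :
    ρ * al * x / (ρ * at_ * y + 1) > γ ↔ γ * at_ / al * y + γ / (ρ * al) < x := by
  have hρal : 0 < ρ * al := mul_pos hρ hal
  have hscale : ρ * al * (γ * at_ / al * y + γ / (ρ * al)) = γ * (ρ * at_ * y + 1) := by
    field_simp
  rw [gt_iff_lt, lt_div_iff₀ (by positivity), ← hscale]
  exact mul_lt_mul_iff_of_pos_left hρal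

/-- Error floor of the uplink-NOMA-type SINR: the non-outage probability tends to
`1/(1 + γ a_t Ω_t/(a_l Ω_l)) < 1` as `ρ → ∞`. -/
theorem sinr_error_floor
    {Ω' : Type*} [MeasurableSpace Ω'] (μ : Measure Ω') [IsProbabilityMeasure μ]
    (Xl Xt : Ω' → ℝ) (Oml Omt al at_ γ : ℝ)
    (hOml : 0 < Oml) (hOmt : 0 < Omt) (hal : 0 < al) (hat : 0 < at_) (hγ : 0 < γ)
    (hmXl : Measurable Xl) (hmXt : Measurable Xt)
    (hindep : IndepFun Xl Xt μ)
    (hXl : Measure.map Xl μ = expMeasure (1 / Oml))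
    (hXt : Measure.map Xt μ = expMeasure (1 / Omt)) :
    Tendsto (fun ρ : ℝ =>
        (μ {ω | ρ * al * Xl ω / (ρ * at_ * Xt ω + 1) > γ}).toReal)
      atTop (nhds (1 / (1 + γ * at_ * Omt / (al * Oml)))) ∧
    1 / (1 + γ * at_ * Omt / (al * Oml)) < 1 := by
  have hL : (1 / Omt) / (1 / Omt + 1 / Oml * (γ * at_ / al))
      = 1 / (1 + γ * at_ * Omt / (al * Oml)) := by
    field_simp
  set L := 1 / (1 + γ * at_ * Omt / (al * Oml))
  have hXt_nonneg : ∀ᵐ ω ∂μ, 0 ≤ Xt ω :=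
    (ae_map_iff hmXt.aemeasurable measurableSet_Ici).mp (hXt ▸ ae_nonneg_expMeasure _)
  have hprob : ∀ ρ > 0, μ {ω | ρ * al * Xl ω / (ρ * at_ * Xt ω + 1) > γ}
      = ENNReal.ofReal (rexp (-(1 / Oml * (γ / (ρ * al)))) * L) := by
    intro ρ hρ
    rw [← hL, ← measure_affine_lt_of_indepFun (by positivity) (by positivity) (by positivity)
      (by positivity) hmXl.aemeasurable hmXt.aemeasurable hindep hXl hXt]
    refine measure_congr ?_
    filter_upwards [hXt_nonneg] with ω hω
    exact propext (sinr_gt_iff hρ hal hat.le hω)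
  have hlim : Tendsto (fun ρ : ℝ => rexp (-(1 / Oml * (γ / (ρ * al)))) * L) atTop (nhds L) := by
    have hd : Tendsto (fun ρ : ℝ => γ / (ρ * al)) atTop (nhds 0) :=
      tendsto_const_nhds.div_atTop (tendsto_id.atTop_mul_const hal)
    simpa using ((continuous_exp.tendsto _).comp (hd.const_mul (1 / Oml)).neg).mul_const L
  refine ⟨hlim.congr' ?_, ?_⟩
  · filter_upwards [eventually_gt_atTop 0] with ρ hρ
    rw [hprob ρ hρ, ENNReal.toReal_ofReal (by positivity)]
  · rw [div_lt_one (by positivity)]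
    have : 0 < γ * at_ * Omt / (al * Oml) := by positivity
    linarith
end
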